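/- Let S be a factorial semidomain with semifield of fractions F. For every nonzero polynomial f ∈ F[X], there exist c ∈ F and f₁ ∈ F[X] such that f = c·f₁, c is a content of f, all coefficients of f₁ lie in S, and a gcd of the coefficients of f₁ is 1. -/

import Mathlib

open Polynomial

/-- `ord` is an order function at the prime `p` on the semifield of fractions `F` of `S`:
for every nonzero `a ∈ F`, `a = p ^ (ord a) * (x / y)` where `p` divides neither the
numerator `x` nor the denominator `y`. (`ord_p(0)` is `∞` by convention and is not
constrained here.) -/
def IsOrd {S F : Type*} [CommSemiring S] [Semifield F] [Algebra S F]
    (p : S) (ord : F → ℤ) : Prop :=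
  ∀ a : F, a ≠ 0 → ∃ x y : S, ¬ p ∣ x ∧ ¬ p ∣ y ∧ y ≠ 0 ∧
    a = (algebraMap S F p) ^ (ord a) * (algebraMap S F x / algebraMap S F y)

/-- The order of a polynomial at a prime: the minimum of `ord` over the nonzero
coefficients, with value `⊤` (i.e. `∞`) for the zero polynomial. -/
def ordPoly {F : Type*} [Semifield F] (ord : F → ℤ) (f : Polynomial F) : WithTop ℤ :=
  f.support.inf fun i => ((ord (f.coeff i) : ℤ) : WithTop ℤ)

/-- `c` is a content for the polynomial `f` over the semifield of fractions `F` of `S`: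
the content of the zero polynomial is `0`, and for `f ≠ 0` the content is a nonzero
element whose order at every prime `p` of `S` equals `ord_p(f)`, the minimum of the
orders of the nonzero coefficients of `f` (this characterizes `∏ p ^ ord_p(f)` up to a
unit of `S`). -/
def IsContent {S F : Type*} [CommSemiring S] [Semifield F] [Algebra S F]
    (f : Polynomial F) (c : F) : Prop :=
  (f = 0 → c = 0) ∧ (f ≠ 0 → c ≠ 0 ∧ ∀ (p : S) (ordp : F → ℤ), Prime p → IsOrd p ordp →
    ((ordp c : ℤ) : WithTop ℤ) = ordPoly ordp f)

/-! Clearing denominators, `y • f` has coefficients `b i ∈ S`. In a factorial semidomain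
divisibility is well founded, so among the factorizations `b = g • B` one can take `B i₀`
minimal for strict divisibility; then every common divisor of the `B i` is a unit. With
`f₁ := (y / g) • f`, whose coefficients are the `B i`, we get `f = (g / y) • f₁`. For a prime `p`,
`ord_p` is additive, nonnegative on `S \ {0}` and zero on elements not divisible by `p`; as some
`B i` is not divisible by `p`, the minimum of `ord_p` over the coefficients of `f` is
`ord_p (g / y)`. -/

theorem WfDvdMonoid.exists_eq_mul_forall_isUnit {α ι : Type*} [CommMonoidWithZero α]
    [WfDvdMonoid α] (b : ι → α) {i₀ : ι} (hb : b i₀ ≠ 0) :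
    ∃ (g : α) (B : ι → α), (∀ i, b i = g * B i) ∧ ∀ d, (∀ i, d ∣ B i) → IsUnit d := by
  obtain ⟨_, ⟨g, B, hbB, rfl⟩, hmin⟩ := (wellFounded_dvdNotUnit (α := α)).has_min
    {x | ∃ (g : α) (B : ι → α), (∀ i, b i = g * B i) ∧ B i₀ = x}
    ⟨b i₀, 1, b, fun i => (one_mul _).symm, rfl⟩
  refine ⟨g, B, hbB, fun d hd => by_contra fun hdu => ?_⟩
  choose C hC using hd
  have hC₀ : C i₀ ≠ 0 := by
    rintro h
    exact hb (by rw [hbB, hC, h, mul_zero, mul_zero])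
  -- dividing out a further non-unit common factor would shrink `B i₀` strictly
  exact hmin (C i₀) ⟨g * d, C, fun i => by rw [hbB, hC, mul_assoc], rfl⟩
    ⟨hC₀, d, hdu, by rw [hC, mul_comm]⟩

theorem WfDvdMonoid.of_exists_irreducible_factors {α : Type*} [CommMonoidWithZero α]
    [IsCancelMulZero α] (hprime : ∀ s : α, Irreducible s → Prime s)
    (hfac : ∀ s : α, s ≠ 0 → ¬ IsUnit s →
      ∃ m : Multiset α, (∀ t ∈ m, Irreducible t) ∧ m.prod = s) :
    WfDvdMonoid α :=
  WfDvdMonoid.of_exists_prime_factors fun a ha => by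
    by_cases hu : IsUnit a
    · exact ⟨0, by simp, (associated_one_iff_isUnit.mpr hu).symm⟩
    · obtain ⟨m, hm, rfl⟩ := hfac a ha hu
      exact ⟨m, fun t ht => hprime t (hm t ht), Associated.refl _⟩

theorem IsLocalization.exists_algebraMap_eq_mul_coeff {R A : Type*} [CommSemiring R]
    [CommSemiring A] [Algebra R A] (M : Submonoid R) [IsLocalization M A] (f : A[X]) :
    ∃ (y : M) (b : ℕ → R), ∀ i, algebraMap R A (b i) = algebraMap R A y * f.coeff i := by
  obtain ⟨y, hy⟩ := IsLocalization.exist_integer_multiples M f.support f.coeff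
  have hb : ∀ i, ∃ b : R, algebraMap R A b = algebraMap R A y * f.coeff i := fun i => by
    by_cases hi : i ∈ f.support
    · obtain ⟨b, hb⟩ := hy i hi
      exact ⟨b, by rw [hb, Algebra.smul_def]⟩
    · exact ⟨0, by rw [notMem_support_iff.mp hi, map_zero, mul_zero]⟩
  choose b hb using hb
  exact ⟨y, b, hb⟩

section Localization

variable {S F : Type*} [CommSemiring S] [IsCancelMulZero S] [Semifield F] [Algebra S F]
  [IsLocalization (nonZeroDivisors S) F]

theorem algebraMap_injective_of_isCancelMulZero : Function.Injective (algebraMap S F) :=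
  have := (algebraMap S F).domain_nontrivial
  IsLocalization.injectiveₛ F fun _ hm => IsRegular.of_ne_zero (nonZeroDivisors.ne_zero hm)

theorem algebraMap_ne_zero_of_ne_zero {s : S} (hs : s ≠ 0) : algebraMap S F s ≠ 0 :=
  (map_ne_zero_iff _ algebraMap_injective_of_isCancelMulZero).mpr hs

variable {p : S}

theorem Prime.zpow_eq_of_zpow_mul_div_eq (hp : Prime p) {v w : ℤ} {x y x' y' : S}
    (hx : ¬ p ∣ x) (hy : ¬ p ∣ y) (hx' : ¬ p ∣ x') (hy' : ¬ p ∣ y') (hy₀ : y ≠ 0)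
    (hy'₀ : y' ≠ 0)
    (h : algebraMap S F p ^ v * (algebraMap S F x / algebraMap S F y) =
      algebraMap S F p ^ w * (algebraMap S F x' / algebraMap S F y')) : v = w := by
  wlog hvw : w ≤ v generalizing v w x y x' y'
  · exact (this hx' hy' hx hy hy'₀ hy₀ h.symm (le_of_not_ge hvw)).symm
  obtain ⟨n, rfl⟩ := Int.le.dest hvw
  have hπ : algebraMap S F p ≠ 0 := algebraMap_ne_zero_of_ne_zero hp.ne_zero
  rw [zpow_add₀ hπ, zpow_natCast, mul_assoc, mul_right_inj' (zpow_ne_zero _ hπ), ← mul_div_assoc,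
    div_eq_div_iff (algebraMap_ne_zero_of_ne_zero hy₀) (algebraMap_ne_zero_of_ne_zero hy'₀),
    ← map_pow, ← map_mul, ← map_mul, ← map_mul] at h
  replace h := algebraMap_injective_of_isCancelMulZero h
  rcases n with _ | n
  · simp
  · have : p ∣ x' * y := h ▸ ((dvd_pow_self p n.succ_ne_zero).mul_right x).mul_right y'
    exact (hp.dvd_or_dvd this).elim (absurd · hx') (absurd · hy)

namespace IsOrd

variable {ordp : F → ℤ}

theorem apply_eq_of_eq_zpow_mul_div (hp : Prime p) (hord : IsOrd p ordp) {a : F} (ha : a ≠ 0)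
    {v : ℤ} {x y : S} (hx : ¬ p ∣ x) (hy : ¬ p ∣ y) (hy₀ : y ≠ 0)
    (h : a = algebraMap S F p ^ v * (algebraMap S F x / algebraMap S F y)) : ordp a = v := by
  obtain ⟨x', y', hx', hy', hy'₀, h'⟩ := hord a ha
  exact hp.zpow_eq_of_zpow_mul_div_eq hx' hy' hx hy hy'₀ hy₀ (h'.symm.trans h)

theorem apply_mul (hp : Prime p) (hord : IsOrd p ordp) {a b : F} (ha : a ≠ 0) (hb : b ≠ 0) :
    ordp (a * b) = ordp a + ordp b := by
  obtain ⟨x, y, hx, hy, hy₀, hax⟩ := hord a ha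
  obtain ⟨x', y', hx', hy', hy'₀, hbx⟩ := hord b hb
  refine apply_eq_of_eq_zpow_mul_div hp hord (mul_ne_zero ha hb)
    (fun h => (hp.dvd_or_dvd h).elim hx hx') (fun h => (hp.dvd_or_dvd h).elim hy hy')
    (mul_ne_zero hy₀ hy'₀) ?_
  conv_lhs => rw [hax, hbx]
  rw [zpow_add₀ (algebraMap_ne_zero_of_ne_zero hp.ne_zero), map_mul, map_mul,
    ← div_mul_div_comm]
  ring

theorem apply_algebraMap_nonneg (hp : Prime p) (hord : IsOrd p ordp) {s : S} (hs : s ≠ 0) :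
    0 ≤ ordp (algebraMap S F s) := by
  obtain ⟨x, y, hx, -, hy₀, h⟩ := hord _ (algebraMap_ne_zero_of_ne_zero hs)
  by_contra! hneg
  obtain ⟨n, hn⟩ := Int.exists_eq_neg_ofNat hneg.le
  have hn₀ : n ≠ 0 := by rintro rfl; simp at hn; omega
  rw [hn, zpow_neg, zpow_natCast, eq_comm, inv_mul_eq_iff_eq_mul₀ (pow_ne_zero _
    (algebraMap_ne_zero_of_ne_zero hp.ne_zero)), div_eq_iff (algebraMap_ne_zero_of_ne_zero hy₀),
    ← map_pow, ← map_mul, ← map_mul] at h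
  exact hx (algebraMap_injective_of_isCancelMulZero h ▸
    ((dvd_pow_self p hn₀).mul_right s).mul_right y)

theorem apply_algebraMap_eq_zero (hp : Prime p) (hord : IsOrd p ordp) {s : S} (hs : s ≠ 0)
    (hps : ¬ p ∣ s) : ordp (algebraMap S F s) = 0 :=
  have := (algebraMap S F).domain_nontrivial
  apply_eq_of_eq_zpow_mul_div hp hord (algebraMap_ne_zero_of_ne_zero hs) hps
    (fun h => hp.not_isUnit (isUnit_of_dvd_one h)) one_ne_zero (by simp)

end IsOrd

theorem ordPoly_C_mul_eq {ordp : F → ℤ} (hp : Prime p) (hord : IsOrd p ordp) {c : F}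
    (hc : c ≠ 0) {f₁ : F[X]} {a : ℕ → S} (ha : ∀ i, algebraMap S F (a i) = f₁.coeff i)
    (hpa : ∃ i, ¬ p ∣ a i) : ordPoly ordp (C c * f₁) = ordp c := by
  have hmem : ∀ i, i ∈ (C c * f₁).support ↔ a i ≠ 0 := by
    simp [coeff_C_mul, ← ha, hc, map_eq_zero_iff _ algebraMap_injective_of_isCancelMulZero]
  have hcoeff : ∀ i, a i ≠ 0 →
      ordp ((C c * f₁).coeff i) = ordp c + ordp (algebraMap S F (a i)) := fun i hi => by
    rw [coeff_C_mul, ← ha]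
    exact hord.apply_mul hp hc (algebraMap_ne_zero_of_ne_zero hi)
  obtain ⟨i₁, hi₁⟩ := hpa
  have ha₁ : a i₁ ≠ 0 := fun h => hi₁ (h ▸ dvd_zero p)
  apply le_antisymm
  · refine (Finset.inf_le ((hmem i₁).2 ha₁)).trans_eq ?_
    rw [hcoeff i₁ ha₁, hord.apply_algebraMap_eq_zero hp ha₁ hi₁, add_zero]
  · refine Finset.le_inf fun i hi => WithTop.coe_le_coe.mpr ?_
    rw [hcoeff i ((hmem i).1 hi)]
    linarith [hord.apply_algebraMap_nonneg hp ((hmem i).1 hi)]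

theorem isContent_C_mul {c : F} (hc : c ≠ 0) {f₁ : F[X]} {a : ℕ → S}
    (ha : ∀ i, algebraMap S F (a i) = f₁.coeff i) (hprim : ∀ d, (∀ i, d ∣ a i) → IsUnit d) :
    IsContent (S := S) (C c * f₁) c := by
  have := (algebraMap S F).domain_nontrivial
  have hf : C c * f₁ ≠ 0 := by
    obtain ⟨i, hi⟩ : ∃ i, a i ≠ 0 := by
      by_contra! h₀
      exact not_isUnit_zero (hprim 0 fun i => (h₀ i).symm ▸ dvd_rfl)
    intro h₀
    have hcoeff := congrArg (coeff · i) h₀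
    simp only [coeff_C_mul, ← ha, coeff_zero] at hcoeff
    exact mul_ne_zero hc (algebraMap_ne_zero_of_ne_zero hi) hcoeff
  refine ⟨fun h => absurd h hf, fun _ => ⟨hc, fun p ordp hp hord => ?_⟩⟩
  refine (ordPoly_C_mul_eq hp hord hc ha ?_).symm
  by_contra! h
  exact hp.not_isUnit (hprim p h)

end Localization

/-- In a factorial semidomain `S` with semifield of fractions `F`, every nonzero
`f ∈ F[X]` factors as `f = c • f₁` where `c` is a content of `f`, all coefficients of
`f₁` lie in `S`, and a gcd of the coefficients of `f₁` is `1` (i.e. every common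
divisor of the coefficients is a unit). -/
theorem exists_content_factorization {S F : Type*} [CommSemiring S] [IsCancelMulZero S]
    [Semifield F] [Algebra S F] [IsLocalization (nonZeroDivisors S) F]
    (hFact1 : ∀ s : S, Irreducible s → Prime s)
    (hFact2 : ∀ s : S, s ≠ 0 → ¬ IsUnit s →
      ∃ m : Multiset S, (∀ t ∈ m, Irreducible t) ∧ m.prod = s)
    (f : Polynomial F) (hf : f ≠ 0) :
    ∃ (c : F) (f₁ : Polynomial F), IsContent (S := S) f c ∧ f = Polynomial.C c * f₁ ∧
      ∃ a : ℕ → S, (∀ i, algebraMap S F (a i) = f₁.coeff i) ∧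
        ∀ d : S, (∀ i, d ∣ a i) → IsUnit d := by
  have := (algebraMap S F).domain_nontrivial
  have := WfDvdMonoid.of_exists_irreducible_factors hFact1 hFact2
  obtain ⟨y, b, hb⟩ := IsLocalization.exists_algebraMap_eq_mul_coeff (nonZeroDivisors S) f
  have hy : algebraMap S F y ≠ 0 := algebraMap_ne_zero_of_ne_zero (nonZeroDivisors.coe_ne_zero y)
  obtain ⟨i₀, hi₀⟩ := support_nonempty.mpr hf
  have hb₀ : b i₀ ≠ 0 := fun h => mem_support_iff.mp hi₀ (by simpa [h, hy] using hb i₀)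
  obtain ⟨g, B, hbB, hB⟩ := WfDvdMonoid.exists_eq_mul_forall_isUnit b hb₀
  have hg : algebraMap S F g ≠ 0 :=
    algebraMap_ne_zero_of_ne_zero (left_ne_zero_of_mul (hbB i₀ ▸ hb₀))
  set f₁ := C (algebraMap S F y / algebraMap S F g) * f
  have hf₁ : ∀ i, algebraMap S F (B i) = f₁.coeff i := fun i => by
    rw [coeff_C_mul, div_mul_eq_mul_div, ← hb, hbB, map_mul, mul_div_cancel_left₀ _ hg]
  have hff₁ : f = C (algebraMap S F g / algebraMap S F y) * f₁ := by
    rw [← mul_assoc, ← C_mul, div_mul_div_cancel₀ hy, div_self hg, C_1, one_mul]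
  exact ⟨_, f₁, hff₁ ▸ isContent_C_mul (div_ne_zero hg hy) hf₁ hB, hff₁, B, hf₁, hB⟩
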